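/- arXiv:2604.24749 — 2 statements merged into one kernel-verified Lean document; each statement's English description precedes it below -/
import Mathlib

section
/- Let k ≥ 2 and n ≥ 1 be integers and let W ⊆ [k]^n be a nonempty finite class. For all integers ℓ ≥ 1 and s ≥ d^ℓ_DS(W), the set of monomials M^ℓ_s(W) spans the real vector space V_W of all functions from W to ℝ. -/
open scoped Classical

section Defs

variable {X Y : Type*}

/-- `f` and `g` are `i`-neighbors: they differ at coordinate `i` and agree elsewhere. -/
def IsNeighbor {n : ℕ} (i : Fin n) (f g : Fin n → Y) : Prop :=
  f i ≠ g i ∧ ∀ j : Fin n, j ≠ i → f j = g j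

/-- The restriction `H|_S` of a hypothesis class to a sequence `S`. -/
def restrictClass (H : Set (X → Y)) {d : ℕ} (S : Fin d → X) : Set (Fin d → Y) :=
  (fun h i => h (S i)) '' H

/-- A class `G ⊆ Y^d` is ℓ-DS shattered (as a pattern class). -/
def DSShattered {d : ℕ} (G : Set (Fin d → Y)) (ℓ : ℕ) : Prop :=
  ∃ F : Finset (Fin d → Y), F.Nonempty ∧ ↑F ⊆ G ∧
    ∀ f ∈ F, ∀ i : Fin d, ℓ ≤ {g : Fin d → Y | g ∈ F ∧ IsNeighbor i f g}.ncard

/-- `H` ℓ-DS shatters the sequence `S`. -/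
def DSShatters (H : Set (X → Y)) (ℓ : ℕ) {d : ℕ} (S : Fin d → X) : Prop :=
  DSShattered (restrictClass H S) ℓ

/-- The ℓ-DS dimension of `H` equals `d`. -/
def DSDimEq (H : Set (X → Y)) (ℓ d : ℕ) : Prop :=
  (∃ S : Fin d → X, DSShatters H ℓ S) ∧
    ∀ d' : ℕ, (∃ S : Fin d' → X, DSShatters H ℓ S) → d' ≤ d

/-- Restriction of `w` to the coordinates other than `i`. -/
def deleteCoord {n : ℕ} (i : Fin n) (w : Fin n → Y) : {j : Fin n // j ≠ i} → Y :=
  fun j => w j.1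

/-- The edge `e_{i,a}` of the one-inclusion graph of `W`. -/
noncomputable def edgeFinset {n : ℕ} (W : Finset (Fin n → Y)) (i : Fin n)
    (a : {j : Fin n // j ≠ i} → Y) : Finset (Fin n → Y) :=
  W.filter fun w => deleteCoord i w = a

/-- The set `T_i` of behaviors of `W` on coordinates other than `i`. -/
noncomputable def behaviors {n : ℕ} (W : Finset (Fin n → Y)) (i : Fin n) :
    Finset ({j : Fin n // j ≠ i} → Y) :=
  W.image (deleteCoord i)

/-- The ℓ-density `dens^ℓ(W) = (1/|W|) Σ_{e ∈ E} (|e| − ℓ)₊` of the one-inclusion graph. -/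
noncomputable def dens {n : ℕ} (W : Finset (Fin n → Y)) (ℓ : ℕ) : ℝ :=
  ((∑ i : Fin n, ∑ a ∈ behaviors W i, ((edgeFinset W i a).card - ℓ) : ℕ) : ℝ) / (W.card : ℝ)

/-- The maximum ℓ-density function `μ^ℓ_H(n)`. -/
noncomputable def maxDensityFn (H : Set (X → Y)) (ℓ n : ℕ) : ℝ :=
  sSup {r : ℝ | ∃ (S : Fin n → X) (F : Finset (Fin n → Y)),
    F.Nonempty ∧ ↑F ⊆ restrictClass H S ∧ r = dens F ℓ}

end Defs

section Monomials

/-- The monomial function `w ↦ w_1^{α_1} ⋯ w_n^{α_n}` on `W`, where the label `w_i ∈ Fin k`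
is viewed as the integer `(w_i : ℕ) + 1 ∈ {1, …, k}`. -/
noncomputable def monomialFn {n k : ℕ} (W : Finset (Fin n → Fin k)) (α : Fin n → ℕ) :
    (↑W : Set (Fin n → Fin k)) → ℝ :=
  fun w => ∏ i : Fin n, (((w.1 i : ℕ) : ℝ) + 1) ^ (α i)

/-- The set `M^ℓ_s(W)` of monomials with exponents in `{0, …, k−1}` and at most `s`
coordinates of exponent `≥ ℓ`, viewed inside `V_W = (W → ℝ)`. -/
def monomialSet {n k : ℕ} (W : Finset (Fin n → Fin k)) (ℓ s : ℕ) :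
    Set ((↑W : Set (Fin n → Fin k)) → ℝ) :=
  { f | ∃ α : Fin n → ℕ, (∀ i, α i ≤ k - 1) ∧
      {i : Fin n | ℓ ≤ α i}.ncard ≤ s ∧ f = monomialFn W α }

end Monomials

/-! If the monomials in `M^ℓ_s(W)` did not span `V_W`, some nonzero `g : W → ℝ` would be
orthogonal to all of them. Extend `g` by zero to the cube `[k]^n` and induct on `n`. If some
fibre of `g` along a coordinate `i` has a nonzero moment `∑_b g(… b …) b^j` of order `j < ℓ`,
these moments form a nonzero function on `[k]^(n-1)`, again orthogonal to the admissible
monomials, and its shattered sequences lift to `g`. Otherwise every fibre is orthogonal to all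
polynomials of degree `< ℓ`, so by Lagrange interpolation each nonzero fibre has more than `ℓ`
points: the support of `g` is `ℓ`-DS shattered on all `n` coordinates. This suffices because
`s < n`: for `s ≥ n` every monomial with exponents `< k` is admissible, and the same fibre
argument with `k` in place of `ℓ` forces `g = 0`. -/

open Finset Function

section Interpolation

variable {ι K : Type*} [Fintype ι] [Field K]

theorem lt_card_support_of_sum_mul_pow_eq_zero {v : ι → K} (hv : Injective v) {φ : ι → K}
    (hφ : φ ≠ 0) {m : ℕ} (h : ∀ j < m, ∑ b, φ b * v b ^ j = 0) : m < #{b | φ b ≠ 0} := by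
  by_contra! hm
  set T : Finset ι := {b | φ b ≠ 0}
  obtain ⟨b₀, hb₀⟩ := Function.ne_iff.mp hφ
  have hb₀T : b₀ ∈ T := by simpa [T] using hb₀
  set p := Lagrange.basis T v b₀
  have hp : p.natDegree < m := by
    rw [Lagrange.natDegree_basis hv.injOn hb₀T]
    have := Finset.card_pos.mpr ⟨b₀, hb₀T⟩
    omega
  have hzero : ∑ b, φ b * p.eval (v b) = 0 := by
    simp_rw [Polynomial.eval_eq_sum_range' hp, Finset.mul_sum]
    rw [Finset.sum_comm]
    refine Finset.sum_eq_zero fun j hj => ?_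
    simp_rw [mul_left_comm (φ _), ← Finset.mul_sum, h j (Finset.mem_range.mp hj), mul_zero]
  have hsingle : ∑ b, φ b * p.eval (v b) = φ b₀ := by
    rw [Finset.sum_eq_single b₀ (fun b _ hb => ?_) (by simp),
      Lagrange.eval_basis_self hv.injOn hb₀T, mul_one]
    by_cases hφb : φ b = 0
    · rw [hφb, zero_mul]
    · rw [Lagrange.eval_basis_of_ne hb.symm (by simpa [T] using hφb), mul_zero]
  exact hb₀ (by simpa [hsingle] using hzero)

end Interpolation

section Shattering

variable {X Y : Type*} {ℓ : ℕ}

theorem ncard_setOf_isNeighbor {d : ℕ} (F : Finset (Fin d → Y)) (f : Fin d → Y) (i : Fin d) :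
    {g | g ∈ F ∧ IsNeighbor i f g}.ncard = {b | b ≠ f i ∧ update f i b ∈ F}.ncard := by
  have : {g | g ∈ F ∧ IsNeighbor i f g} = update f i '' {b | b ≠ f i ∧ update f i b ∈ F} := by
    ext g
    constructor
    · rintro ⟨hg, hne, hagree⟩
      have hupd : update f i (g i) = g :=
        (eq_update_iff.mpr ⟨rfl, fun j hj => (hagree j hj).symm⟩).symm
      exact ⟨g i, ⟨Ne.symm hne, by rwa [hupd]⟩, hupd⟩
    · rintro ⟨b, ⟨hb, hmem⟩, rfl⟩
      exact ⟨hmem, by simpa using Ne.symm hb, fun j hj => (update_of_ne hj b f).symm⟩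
  rw [this, Set.ncard_image_of_injective _ (update_injective f i)]

theorem DSShattered.mono {d : ℕ} {G G' : Set (Fin d → Y)} (hG : DSShattered G ℓ) (h : G ⊆ G') :
    DSShattered G' ℓ :=
  let ⟨F, hFne, hFG, hF⟩ := hG
  ⟨F, hFne, hFG.trans h, hF⟩

theorem DSShatters.mono {H H' : Set (X → Y)} {d : ℕ} {S : Fin d → X} (hH : DSShatters H ℓ S)
    (h : H ⊆ H') : DSShatters H' ℓ S :=
  DSShattered.mono hH (Set.image_mono h)

theorem DSShattered.dsShatters_of_injective {n d : ℕ} {G : Set (Fin n → Y)}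
    (hG : DSShattered G ℓ) {S : Fin d → Fin n} (hS : Injective S) : DSShatters G ℓ S := by
  obtain ⟨F, hFne, hFG, hF⟩ := hG
  set F' := F.image fun f r => f (S r)
  refine ⟨F', hFne.image _, ?_, ?_⟩
  · rw [Finset.coe_image]
    exact Set.image_mono hFG
  · intro f' hf' r
    obtain ⟨f, hf, rfl⟩ := Finset.mem_image.mp hf'
    have hfin : {b | b ≠ f (S r) ∧ update (fun r => f (S r)) r b ∈ F'}.Finite :=
      (F'.finite_toSet.preimage (update_injective _ r).injOn).subset fun b hb => hb.2
    rw [ncard_setOf_isNeighbor]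
    refine (ncard_setOf_isNeighbor F f (S r) ▸ hF f hf (S r)).trans (Set.ncard_le_ncard ?_ hfin)
    rintro b ⟨hb, hmem⟩
    exact ⟨hb, Finset.mem_image.mpr ⟨_, hmem, update_comp_eq_of_injective' f hS r b⟩⟩

end Shattering

section Cube

variable {K : Type*} [Field K] {k : ℕ} (v : Fin k → K)

def AnnihilatesMonomials (ℓ s : ℕ) {n : ℕ} (g : (Fin n → Fin k) → K) : Prop :=
  ∀ α : Fin n → ℕ, (∀ i, α i < k) → {i | ℓ ≤ α i}.ncard ≤ s →
    ∑ x, g x * ∏ i, v (x i) ^ α i = 0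

def fiberMoment {n : ℕ} (g : (Fin (n + 1) → Fin k) → K) (i : Fin (n + 1)) (j : ℕ)
    (y : Fin n → Fin k) : K :=
  ∑ b, g (i.insertNth b y) * v b ^ j

variable {v}

theorem sum_fiberMoment_mul_monomial {n : ℕ} (g : (Fin (n + 1) → Fin k) → K) (i : Fin (n + 1))
    (j : ℕ) (α : Fin n → ℕ) :
    ∑ y, fiberMoment v g i j y * ∏ d, v (y d) ^ α d =
      ∑ x, g x * ∏ r, v (x r) ^ (i.insertNth j α : Fin (n + 1) → ℕ) r := by
  rw [← (Fin.insertNthEquiv (fun _ => Fin k) i).sum_comp, Fintype.sum_prod_type, Finset.sum_comm]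
  refine Finset.sum_congr rfl fun y _ => ?_
  simp only [fiberMoment, Finset.sum_mul, Fin.insertNthEquiv_apply, Fin.prod_univ_succAbove _ i,
    Fin.insertNth_apply_same, Fin.insertNth_apply_succAbove, mul_assoc]
  rfl

theorem ncard_setOf_le_insertNth_of_lt {n ℓ j : ℕ} (hj : j < ℓ) (i : Fin (n + 1))
    (α : Fin n → ℕ) :
    {r | ℓ ≤ (i.insertNth j α : Fin (n + 1) → ℕ) r}.ncard = {d | ℓ ≤ α d}.ncard := by
  have : {r | ℓ ≤ (i.insertNth j α : Fin (n + 1) → ℕ) r} = i.succAbove '' {d | ℓ ≤ α d} := by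
    ext r
    cases r using Fin.succAboveCases i with
    | x => simp [hj, Fin.succAbove_ne]
    | p d => simp [Fin.succAbove_right_injective.mem_set_image]
  rw [this, Set.ncard_image_of_injective _ Fin.succAbove_right_injective]

theorem AnnihilatesMonomials.fiberMoment {ℓ s n : ℕ} {g : (Fin (n + 1) → Fin k) → K}
    (h : AnnihilatesMonomials v ℓ s g) (i : Fin (n + 1)) {j : ℕ} (hjℓ : j < ℓ) (hjk : j < k) :
    AnnihilatesMonomials v ℓ s (fiberMoment v g i j) := by
  intro α hα hαs
  rw [sum_fiberMoment_mul_monomial]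
  refine h _ ((Fin.forall_iff_succAbove i).mpr ⟨?_, ?_⟩) ?_
  · simpa using hjk
  · simpa using hα
  · rwa [ncard_setOf_le_insertNth_of_lt hjℓ]

theorem AnnihilatesMonomials.of_dim_le {ℓ s n : ℕ} {g : (Fin n → Fin k) → K}
    (h : AnnihilatesMonomials v ℓ s g) (hns : n ≤ s) (ℓ' s' : ℕ) :
    AnnihilatesMonomials v ℓ' s' g := fun α hα _ =>
  h α hα ((Set.ncard_le_card _).trans (by simpa using hns))

theorem lt_card_fiber_support {n m : ℕ} (hv : Injective v) {g : (Fin (n + 1) → Fin k) → K}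
    {i : Fin (n + 1)} {y : Fin n → Fin k} (h : ∀ j < m, fiberMoment v g i j y = 0) {b : Fin k}
    (hb : g (i.insertNth b y) ≠ 0) : m < #{b | g (i.insertNth b y) ≠ 0} :=
  lt_card_support_of_sum_mul_pow_eq_zero hv (Function.ne_iff.mpr ⟨b, hb⟩) h

theorem AnnihilatesMonomials.eq_zero (hv : Injective v) {s : ℕ} :
    ∀ {n : ℕ} {g : (Fin n → Fin k) → K}, AnnihilatesMonomials v k s g → g = 0
  | 0, g, h => by
    funext x
    simpa [Subsingleton.elim x default] using
      h 0 (fun i => i.elim0) (by simp [Set.eq_empty_of_isEmpty])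
  | n + 1, g, h => by
    funext x
    by_contra hx
    rw [← Fin.insertNth_self_removeNth 0 x] at hx
    have hmoments := fun j (hj : j < k) =>
      congrFun ((h.fiberMoment 0 hj hj).eq_zero hv) (Fin.removeNth 0 x)
    exact (lt_card_fiber_support hv hmoments hx).not_ge (card_le_univ _ |>.trans_eq (by simp))

theorem restrictClass_support_fiberMoment_subset {n d : ℕ} (g : (Fin (n + 1) → Fin k) → K)
    (i : Fin (n + 1)) (j : ℕ) (S : Fin d → Fin n) :
    restrictClass (support (fiberMoment v g i j)) S ⊆
      restrictClass (support g) fun r => i.succAbove (S r) := by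
  rintro _ ⟨y, hy, rfl⟩
  obtain ⟨b, -, hb⟩ := Finset.exists_ne_zero_of_sum_ne_zero hy
  exact ⟨i.insertNth b y, left_ne_zero_of_mul hb, by simp⟩

theorem dsShattered_support {n ℓ : ℕ} (hv : Injective v) {g : (Fin (n + 1) → Fin k) → K}
    (hg : g ≠ 0) (h : ∀ i y, ∀ j < min ℓ k, fiberMoment v g i j y = 0) :
    DSShattered (support g) ℓ := by
  obtain ⟨x₀, hx₀⟩ := Function.ne_iff.mp hg
  refine ⟨({x | g x ≠ 0} : Finset _), ⟨x₀, by simpa using hx₀⟩, fun x hx => by simpa using hx,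
    fun x hx i => ?_⟩
  replace hx : g (i.insertNth (x i) (i.removeNth x)) ≠ 0 := by simpa using hx
  have hfiber := lt_card_fiber_support hv (h i _) hx
  have hcard : #{b | g (i.insertNth b (i.removeNth x)) ≠ 0} ≤ k :=
    (card_le_univ _).trans_eq (Fintype.card_fin k)
  have hneighbors : {b | b ≠ x i ∧ update x i b ∈ ({x | g x ≠ 0} : Finset _)} =
      ↑(({b | g (i.insertNth b (i.removeNth x)) ≠ 0} : Finset (Fin k)).erase (x i)) := by
    ext b
    simp [Fin.insertNth_removeNth, and_comm]
  rw [ncard_setOf_isNeighbor, hneighbors, Set.ncard_coe_finset,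
    card_erase_of_mem (by simpa using hx)]
  omega

theorem exists_dsShatters_support {ℓ s : ℕ} (hv : Injective v) :
    ∀ {n : ℕ} {g : (Fin n → Fin k) → K}, g ≠ 0 → AnnihilatesMonomials v ℓ s g →
      ∃ S : Fin (s + 1) → Fin n, DSShatters (support g) ℓ S
  | 0, _, hg, h => absurd ((h.of_dim_le (Nat.zero_le s) k s).eq_zero hv) hg
  | n + 1, g, hg, h => by
    rcases le_or_gt (n + 1) s with hns | hsn
    · exact absurd ((h.of_dim_le hns k s).eq_zero hv) hg
    by_cases hmoment : ∃ i y, ∃ j < min ℓ k, fiberMoment v g i j y ≠ 0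
    · obtain ⟨i, y, j, hj, hy⟩ := hmoment
      obtain ⟨S, hS⟩ := exists_dsShatters_support hv (Function.ne_iff.mpr ⟨y, hy⟩)
        (h.fiberMoment i (lt_min_iff.mp hj).1 (lt_min_iff.mp hj).2)
      exact ⟨_, DSShattered.mono hS (restrictClass_support_fiberMoment_subset g i j S)⟩
    · push Not at hmoment
      exact ⟨Fin.castLE hsn, (dsShattered_support hv hg hmoment).dsShatters_of_injective
        (Fin.castLE_injective hsn)⟩

end Cube

theorem Submodule.span_eq_top_of_forall_sum_mul_eq_zero {K ι : Type*} [Field K] [Fintype ι]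
    {M : Set (ι → K)} (h : ∀ g : ι → K, (∀ f ∈ M, ∑ i, g i * f i = 0) → g = 0) :
    Submodule.span K M = ⊤ := by
  by_contra hM
  obtain ⟨φ, hφ, hφM⟩ := Submodule.exists_dual_map_eq_bot_of_lt_top (lt_top_iff_ne_top.mpr hM)
    inferInstance
  have hφ_eq (f : ι → K) : φ f = ∑ i, φ (fun j => if i = j then 1 else 0) * f i := by
    simp_rw [LinearMap.pi_apply_eq_sum_univ φ f, smul_eq_mul, mul_comm]
  have hg : (fun i => φ fun j => if i = j then 1 else 0) = 0 := h _ fun f hf => by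
    rw [← hφ_eq]
    exact LinearMap.le_ker_iff_map.mpr hφM (Submodule.subset_span hf)
  exact hφ (LinearMap.ext fun f => by simp [hφ_eq f, congrFun hg])

theorem Fintype.sum_extend_zero_mul {α β R : Type*} [Fintype α] [Fintype β] [CommSemiring R]
    {e : α → β} (he : Injective e) (g : α → R) (m : β → R) :
    ∑ b, extend e g 0 b * m b = ∑ a, g a * m (e a) := by
  rw [← Finset.sum_subset (Finset.subset_univ (Finset.univ.map ⟨e, he⟩)), Finset.sum_map]
  · simp [he.extend_apply]
  · intro b _ hb
    rw [extend_apply' _ _ _ (by simpa using hb), Pi.zero_apply, zero_mul]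

theorem monomialSet_spans_general (k n ℓ s d : ℕ)
    (W : Finset (Fin n → Fin k))
    (hdim : DSDimEq (↑W : Set (Fin n → Fin k)) ℓ d) (hs : d ≤ s) :
    Submodule.span ℝ (monomialSet W ℓ s) = ⊤ := by
  set v : Fin k → ℝ := fun b => (b : ℕ) + 1
  have hv : Injective v := fun a b hab => Fin.ext (by simpa [v] using hab)
  refine Submodule.span_eq_top_of_forall_sum_mul_eq_zero fun g hg => ?_
  by_contra hg0
  set G := extend Subtype.val g 0
  have hG : AnnihilatesMonomials v ℓ s G := fun α hα hαs => by
    rw [Fintype.sum_extend_zero_mul Subtype.val_injective]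
    exact hg _ ⟨α, fun i => Nat.le_sub_one_of_lt (hα i), hαs, rfl⟩
  have hG0 : G ≠ 0 := fun h => hg0 (funext fun w => by
    simpa [G, Subtype.val_injective.extend_apply] using congrFun h w)
  obtain ⟨S, hS⟩ := exists_dsShatters_support hv hG0 hG
  have hGW : support G ⊆ W := fun x hx => by
    by_contra hxW
    exact hx (extend_apply' _ _ _ fun ⟨w, hw⟩ => hxW (hw ▸ w.2))
  have := hdim.2 (s + 1) ⟨S, hS.mono hGW⟩
  omega

/-- Spanning Lemma, Hanneke et al. 2026. For a nonempty finite
`W ⊆ [k]^n` and integers `ℓ ≥ 1`, `s ≥ d^ℓ_DS(W)`, the monomial set `M^ℓ_s(W)`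
spans the vector space `V_W` of all functions `W → ℝ`. -/
theorem monomialSet_spans (k n ℓ s d : ℕ) (hk : 2 ≤ k) (hn : 1 ≤ n) (hℓ : 1 ≤ ℓ)
    (W : Finset (Fin n → Fin k)) (hW : W.Nonempty)
    (hdim : DSDimEq (↑W : Set (Fin n → Fin k)) ℓ d) (hs : d ≤ s) :
    Submodule.span ℝ (monomialSet W ℓ s) = ⊤ :=
  monomialSet_spans_general k n ℓ s d W hdim hs
end

section
/- Let k ≥ 2, n ≥ 1, ℓ ≥ 1, s ≥ 0 be integers, let W ⊆ [k]^n be a nonempty finite class, and let B ⊆ M^ℓ_s(W) be a linearly independent set of monomials in V_W. Fix a direction i ∈ [n], and let B^{<ℓ}_i be the set of monomials in B whose exponent α_i at coordinate i satisfies α_i < ℓ. Then |B^{<ℓ}_i| ≤ Σ_{a ∈ T_i} min(ℓ, |e_{i,a}|), where T_i = {w_{−i} : w ∈ W} and e_{i,a} = {w ∈ W : w_{−i} = a}. In particular, if B is a basis of V_W, then |B \ B^{<ℓ}_i| ≥ Σ_{a ∈ T_i} (|e_{i,a}| − ℓ)_+. -/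
open scoped Classical

/-!
Split `W` into the edges `e_{i,a}`, `a ∈ T_i`. On `e_{i,a}` a monomial with `α_i < ℓ` is a
constant multiple of `w ↦ (w_i + 1)^{α_i}`, so every such monomial lies in the sum over `a` of the
spaces spanned by `1_{e_{i,a}} · (w_i + 1)^j`, `j < ℓ`. The `a`-th space has `ℓ` generators, all
supported on `e_{i,a}`, hence dimension at most `min ℓ |e_{i,a}|`, and linear independence of `B`
bounds `|B^{<ℓ}_i|` by the dimension of the sum. If `B` is a basis, `|B| = |W| = Σ_a |e_{i,a}|`,
and subtracting gives the second bound since `(c - ℓ)₊ + min ℓ c = c`.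
-/

open Module

theorem Submodule.finrank_finsetSum_le {K V ι : Type*} [Field K] [AddCommGroup V] [Module K V]
    [FiniteDimensional K V] (s : Finset ι) (p : ι → Submodule K V) :
    finrank K ↥(∑ a ∈ s, p a) ≤ ∑ a ∈ s, finrank K (p a) :=
  Finset.sum_hom_rel (r := fun (q : Submodule K V) (d : ℕ) => finrank K q ≤ d)
    (by simp) fun _ _ _ h =>
    (Submodule.finrank_add_le_finrank_add_finrank _ _).trans (by gcongr)

theorem LinearIndepOn.finset_card_le_finrank_of_mem {K V ι : Type*} [Field K] [AddCommGroup V]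
    [Module K V] {v : ι → V} {s : Finset ι} (hs : LinearIndepOn K v s) (P : Submodule K V)
    [FiniteDimensional K P] (hP : ∀ x ∈ s, v x ∈ P) : s.card ≤ finrank K P := by
  calc s.card = finrank K (Submodule.span K (Set.range fun x : (s : Set ι) => v x)) := by
        rw [finrank_span_eq_card hs]; simp
    _ ≤ finrank K P := by
        refine Submodule.finrank_mono (Submodule.span_le.2 ?_)
        rintro _ ⟨x, rfl⟩
        exact hP x x.2

theorem finrank_span_range_le_min_card_of_support_subset {K α ι : Type*} [Field K] [Fintype α]
    [Fintype ι] (s : Finset α) (f : ι → α → K) (hf : ∀ j, Function.support (f j) ⊆ s) :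
    finrank K (Submodule.span K (Set.range f)) ≤ min (Fintype.card ι) s.card := by
  refine le_min (finrank_range_le_card f) ?_
  have hspan : Submodule.span K (Set.range f) ≤
      Submodule.span K (Set.range fun x : s => (Pi.single (x : α) (1 : K) : α → K)) := by
    rw [Submodule.span_le, Set.range_subset_iff]
    intro j
    rw [SetLike.mem_coe, Submodule.mem_span_range_iff_exists_fun]
    refine ⟨fun x => f j x, funext fun y => ?_⟩
    simp only [Finset.sum_apply, Pi.smul_apply, Pi.single_apply, smul_eq_mul, mul_ite, mul_one,
      mul_zero]
    rw [Finset.sum_coe_sort s fun x => if y = x then f j x else 0, Finset.sum_ite_eq]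
    split_ifs with hy
    · rfl
    · exact (Function.notMem_support.1 fun h => hy (hf j h)).symm
  calc finrank K (Submodule.span K (Set.range f))
      ≤ finrank K (Submodule.span K (Set.range fun x : s => (Pi.single (x : α) (1 : K) : α → K))) :=
        Submodule.finrank_mono hspan
    _ ≤ Fintype.card s := finrank_range_le_card _
    _ = s.card := Fintype.card_coe s

section OneInclusion

variable {Y : Type*} {n : ℕ} (W : Finset (Fin n → Y)) (i : Fin n)

theorem mem_edgeFinset {a : {j : Fin n // j ≠ i} → Y} {w : Fin n → Y} :
    w ∈ edgeFinset W i a ↔ w ∈ W ∧ deleteCoord i w = a :=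
  Finset.mem_filter

theorem mem_behaviors {a : {j : Fin n // j ≠ i} → Y} :
    a ∈ behaviors W i ↔ ∃ w ∈ W, deleteCoord i w = a :=
  Finset.mem_image

theorem card_eq_sum_card_edgeFinset :
    W.card = ∑ a ∈ behaviors W i, (edgeFinset W i a).card :=
  Finset.card_eq_sum_card_image _ _

end OneInclusion

section EdgeSpan

variable {n k : ℕ} (W : Finset (Fin n → Fin k)) (i : Fin n)

noncomputable def edgePowerFn (a : {j : Fin n // j ≠ i} → Fin k) (j : ℕ) : ↥W → ℝ :=
  fun w => if deleteCoord i w.1 = a then (((w.1 i : ℕ) : ℝ) + 1) ^ j else 0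

noncomputable def edgeSpan (ℓ : ℕ) (a : {j : Fin n // j ≠ i} → Fin k) : Submodule ℝ (↥W → ℝ) :=
  Submodule.span ℝ (Set.range fun j : Fin ℓ => edgePowerFn W i a j)

theorem finrank_edgeSpan_le (ℓ : ℕ) (a : {j : Fin n // j ≠ i} → Fin k) :
    finrank ℝ (edgeSpan W i ℓ a) ≤ min ℓ (edgeFinset W i a).card := by
  have hsupp : ∀ j : Fin ℓ, Function.support (edgePowerFn W i a j) ⊆
      ((edgeFinset W i a).subtype (· ∈ W) : Set ↥W) := by
    intro j w hw
    have hwa : deleteCoord i w.1 = a := of_not_not fun h => hw (if_neg h)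
    simpa [mem_edgeFinset] using hwa
  have hcard : ((edgeFinset W i a).subtype (· ∈ W)).card = (edgeFinset W i a).card := by
    rw [Finset.card_subtype]
    exact congrArg Finset.card
      (Finset.filter_true_of_mem fun w hw => ((mem_edgeFinset W i).1 hw).1)
  have := finrank_span_range_le_min_card_of_support_subset _ _ hsupp
  rwa [hcard, Fintype.card_fin] at this

theorem monomialFn_eq_sum_smul_edgePowerFn (α : Fin n → ℕ) :
    monomialFn W α = ∑ a ∈ behaviors W i,
      (∏ j : {j : Fin n // j ≠ i}, (((a j : ℕ) : ℝ) + 1) ^ α j) • edgePowerFn W i a (α i) := by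
  funext w
  have hw : deleteCoord i w.1 ∈ behaviors W i := (mem_behaviors W i).2 ⟨w.1, w.2, rfl⟩
  simp only [Finset.sum_apply, Pi.smul_apply, smul_eq_mul, edgePowerFn, mul_ite, mul_zero]
  rw [Finset.sum_ite_eq, if_pos hw, monomialFn, Fintype.prod_eq_mul_prod_subtype_ne _ i]
  exact mul_comm _ _

theorem monomialFn_mem_sum_edgeSpan {ℓ : ℕ} {α : Fin n → ℕ} (hα : α i < ℓ) :
    monomialFn W α ∈ ∑ a ∈ behaviors W i, edgeSpan W i ℓ a := by
  rw [monomialFn_eq_sum_smul_edgePowerFn W i]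
  refine Submodule.sum_mem _ fun a ha => Submodule.smul_mem _ _ ?_
  exact Finset.single_le_sum (f := edgeSpan W i ℓ) (fun _ _ => zero_le) ha
    (Submodule.subset_span ⟨⟨α i, hα⟩, rfl⟩)

theorem card_filter_exponent_lt_le_sum_min (ℓ : ℕ) {B : Finset (Fin n → ℕ)}
    (hB : LinearIndepOn ℝ (monomialFn W) (B : Set (Fin n → ℕ))) :
    (B.filter fun α => α i < ℓ).card ≤ ∑ a ∈ behaviors W i, min ℓ (edgeFinset W i a).card :=
  calc (B.filter fun α => α i < ℓ).card
      ≤ finrank ℝ ↥(∑ a ∈ behaviors W i, edgeSpan W i ℓ a) :=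
        (hB.mono (Finset.coe_subset.2 (Finset.filter_subset _ _))).finset_card_le_finrank_of_mem _
          fun _ hα => monomialFn_mem_sum_edgeSpan W i (Finset.mem_filter.1 hα).2
    _ ≤ ∑ a ∈ behaviors W i, finrank ℝ (edgeSpan W i ℓ a) := Submodule.finrank_finsetSum_le _ _
    _ ≤ ∑ a ∈ behaviors W i, min ℓ (edgeFinset W i a).card :=
        Finset.sum_le_sum fun a _ => finrank_edgeSpan_le W i ℓ a

end EdgeSpan

theorem basis_monomials_direction_count_general (k n ℓ : ℕ) (W : Finset (Fin n → Fin k))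
    (B : Finset (Fin n → ℕ))
    (hind : LinearIndependent ℝ (fun α : ↑B => monomialFn W ↑α))
    (i : Fin n) :
    (B.filter fun α => α i < ℓ).card ≤ ∑ a ∈ behaviors W i, min ℓ (edgeFinset W i a).card ∧
    (Submodule.span ℝ (Set.range (fun α : ↑B => monomialFn W ↑α)) = ⊤ →
      ∑ a ∈ behaviors W i, ((edgeFinset W i a).card - ℓ) ≤
        (B.filter fun α => ¬ α i < ℓ).card) := by
  have hlow := card_filter_exponent_lt_le_sum_min W i ℓ hind
  refine ⟨hlow, fun hspan => ?_⟩
  have hcard : B.card = ∑ a ∈ behaviors W i, (edgeFinset W i a).card := by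
    rw [← card_eq_sum_card_edgeFinset, ← Fintype.card_coe B, ← finrank_span_eq_card hind, hspan,
      finrank_top, Module.finrank_fintype_fun_eq_card]
    exact Fintype.card_coe W
  have hexcess : ∑ a ∈ behaviors W i, ((edgeFinset W i a).card - ℓ) +
      ∑ a ∈ behaviors W i, min ℓ (edgeFinset W i a).card =
        ∑ a ∈ behaviors W i, (edgeFinset W i a).card := by
    rw [← Finset.sum_add_distrib]
    exact Finset.sum_congr rfl fun a _ => by rw [min_comm, Nat.sub_add_min_cancel]
  have hsplit := Finset.card_filter_add_card_filter_not (s := B) (p := fun α => α i < ℓ)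
  omega

/-- For a linearly independent set `B ⊆ M^ℓ_s(W)` of monomials
(identified with their exponent vectors), the number of monomials in `B` whose exponent
at coordinate `i` is `< ℓ` is at most `Σ_{a ∈ T_i} min(ℓ, |e_{i,a}|)`; in particular,
if `B` is a basis of `V_W`, then `|B \ B^{<ℓ}_i| ≥ Σ_{a ∈ T_i} (|e_{i,a}| − ℓ)₊`. -/
theorem basis_monomials_direction_count (k n ℓ s : ℕ) (hk : 2 ≤ k) (hn : 1 ≤ n)
    (hℓ : 1 ≤ ℓ) (W : Finset (Fin n → Fin k)) (hW : W.Nonempty)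
    (B : Finset (Fin n → ℕ))
    (hBdeg : ∀ α ∈ B, ∀ i : Fin n, α i ≤ k - 1)
    (hBsupp : ∀ α ∈ B, {i : Fin n | ℓ ≤ α i}.ncard ≤ s)
    (hind : LinearIndependent ℝ (fun α : ↑B => monomialFn W ↑α))
    (i : Fin n) :
    (B.filter fun α => α i < ℓ).card ≤ ∑ a ∈ behaviors W i, min ℓ (edgeFinset W i a).card ∧
    (Submodule.span ℝ (Set.range (fun α : ↑B => monomialFn W ↑α)) = ⊤ →
      ∑ a ∈ behaviors W i, ((edgeFinset W i a).card - ℓ) ≤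
        (B.filter fun α => ¬ α i < ℓ).card) :=
  basis_monomials_direction_count_general k n ℓ W B hind i
end
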